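/- arXiv:1708.00635 — 3 statements merged into one kernel-verified Lean document; each statement's English description precedes it below -/
import Mathlib

section
/- Mean convergence under common eigenvectors: suppose additionally C[k] = U D[k] Uᴴ for every k ∈ {0,…,N₀−1}, where U is a unitary M×M matrix and each D[k] is a real diagonal matrix with nonnegative entries. Then ρ(Φ(k,k)) < 1 for every k ∈ {0,…,N₀−1} (equivalently, the mean-error recursion is asymptotically periodic for every initial condition) if and only if max over m ∈ {0,…,M−1} of ∏_{l=0}^{N₀−1} |1 − μ (D[l])_{m,m}| is strictly less than 1. -/
open Matrix Filter
open scoped ComplexOrder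

noncomputable section

/-- Spectral radius of a complex matrix: the maximum modulus of its eigenvalues. -/
def specRad {n : Type*} [Fintype n] [DecidableEq n] (A : Matrix n n ℂ) : ℝ :=
  sSup ((fun z : ℂ => ‖z‖) '' spectrum ℂ A)

/-- Product of matrices `A (a + len - 1) * ⋯ * A (a + 1) * A a`
(factors with decreasing index from left to right; empty product is `1`). -/
def prodDesc {M : ℕ} (A : ℕ → Matrix (Fin M) (Fin M) ℂ) (a : ℕ) :
    ℕ → Matrix (Fin M) (Fin M) ℂ
  | 0 => 1
  | (len + 1) => A (a + len) * prodDesc A a len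

open Finset

/-
Since all `C[k]` are diagonalised by the same unitary `U`, so are the factors `I - μ C[l]`
and hence their product: `Φ(k, k) = U diag(∏_j (1 - μ D[(k + j) mod N₀])) Uᴴ`. Its spectral
radius is therefore the largest modulus of a diagonal entry, and since the product runs over a
full period it does not depend on the starting index `k`.
-/

theorem Finset.prod_range_add_mod {β : Type*} [CommMonoid β] (f : ℕ → β) {N : ℕ} [NeZero N]
    (a : ℕ) : ∏ j ∈ range N, f ((a + j) % N) = ∏ j ∈ range N, f j := by
  simp only [← Fin.prod_univ_eq_prod_range]
  exact Fintype.prod_equiv (Equiv.addLeft (Fin.ofNat N a)) _ _ fun i => by simp [Fin.val_add]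

section

variable {M : ℕ} {U : Matrix (Fin M) (Fin M) ℂ}

lemma prodDesc_diagonal (d : ℕ → Fin M → ℂ) (a len : ℕ) :
    prodDesc (fun l => diagonal (d l)) a len = diagonal fun i => ∏ j ∈ range len, d (a + j) i := by
  induction len with
  | zero => simp [prodDesc]
  | succ len ih => simp [prodDesc, ih, diagonal_mul_diagonal, prod_range_succ, mul_comm]

lemma prodDesc_unitary_conj (hU : U ∈ unitaryGroup (Fin M) ℂ)
    (A : ℕ → Matrix (Fin M) (Fin M) ℂ) (a len : ℕ) :
    prodDesc (fun l => U * A l * Uᴴ) a len = U * prodDesc A a len * Uᴴ := by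
  induction len with
  | zero =>
    have hUUh : U * Uᴴ = 1 := mem_unitaryGroup_iff.mp hU
    simp [prodDesc, hUUh]
  | succ len ih =>
    have hUhU : Uᴴ * U = 1 := mem_unitaryGroup_iff'.mp hU
    calc prodDesc (fun l => U * A l * Uᴴ) a (len + 1)
        = U * A (a + len) * (Uᴴ * U) * prodDesc A a len * Uᴴ := by
          rw [prodDesc, ih]
          simp only [Matrix.mul_assoc]
      _ = U * prodDesc A a (len + 1) * Uᴴ := by
          rw [hUhU, Matrix.mul_one, prodDesc, Matrix.mul_assoc U]

lemma one_sub_smul_unitary_conj_diagonal (hU : U ∈ unitaryGroup (Fin M) ℂ) (c : ℂ)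
    (d : Fin M → ℂ) :
    1 - c • (U * diagonal d * Uᴴ) = U * diagonal (fun i => 1 - c * d i) * Uᴴ := by
  have hUUh : U * Uᴴ = 1 := mem_unitaryGroup_iff.mp hU
  have hdiag : diagonal (fun i => 1 - c * d i) = 1 - c • diagonal d := by
    rw [← diagonal_one, ← diagonal_smul, diagonal_sub]
    rfl
  rw [hdiag, Matrix.mul_sub, Matrix.sub_mul, Matrix.mul_one, hUUh, Matrix.mul_smul,
    Matrix.smul_mul]

lemma specRad_diagonal (d : Fin M → ℂ) : specRad (diagonal d) = ⨆ i, ‖d i‖ := by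
  rw [specRad, spectrum_diagonal, ← Set.range_comp]
  rfl

lemma specRad_unitary_conj (hU : U ∈ unitaryGroup (Fin M) ℂ) (A : Matrix (Fin M) (Fin M) ℂ) :
    specRad (U * A * Uᴴ) = specRad A := by
  rw [specRad, specRad, ← star_eq_conjTranspose,
    Unitary.spectrum_star_right_conjugate (U := ⟨U, hU⟩)]

lemma specRad_prodDesc_one_sub_smul {N₀ : ℕ} (hN : 1 ≤ N₀) (μ : ℝ)
    (C : ℕ → Matrix (Fin M) (Fin M) ℂ) (hU : U ∈ unitaryGroup (Fin M) ℂ) (D : ℕ → Fin M → ℝ)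
    (hCU : ∀ k < N₀, C k = U * diagonal (fun i => (D k i : ℂ)) * Uᴴ) (a : ℕ) :
    specRad (prodDesc (fun l => (1 : Matrix (Fin M) (Fin M) ℂ) - (μ : ℂ) • C (l % N₀)) a N₀)
      = ⨆ i, ∏ l ∈ range N₀, |1 - μ * D l i| := by
  have : NeZero N₀ := ⟨by omega⟩
  have hfactor : (fun l => (1 : Matrix (Fin M) (Fin M) ℂ) - (μ : ℂ) • C (l % N₀))
      = fun l => U * diagonal (fun i => ((1 - μ * D (l % N₀) i : ℝ) : ℂ)) * Uᴴ := by
    funext l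
    rw [hCU _ (Nat.mod_lt _ hN), one_sub_smul_unitary_conj_diagonal hU]
    push_cast
    rfl
  rw [hfactor, prodDesc_unitary_conj hU, prodDesc_diagonal, specRad_unitary_conj hU,
    specRad_diagonal]
  refine congrArg iSup (funext fun i => ?_)
  rw [norm_prod, prod_range_add_mod (fun l => ‖((1 - μ * D l i : ℝ) : ℂ)‖)]
  simp only [Complex.norm_real, Real.norm_eq_abs]

end

theorem lms_mean_convergence_common_eigenvectors_general
    {M N₀ : ℕ} (hN : 1 ≤ N₀) (μ : ℝ)
    (C : ℕ → Matrix (Fin M) (Fin M) ℂ)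
    (U : Matrix (Fin M) (Fin M) ℂ) (hU : U ∈ Matrix.unitaryGroup (Fin M) ℂ)
    (D : ℕ → Fin M → ℝ)
    (hCU : ∀ k < N₀, C k = U * Matrix.diagonal (fun i => (D k i : ℂ)) * U.conjTranspose) :
    (∀ k < N₀,
        specRad (prodDesc (fun l => (1 : Matrix (Fin M) (Fin M) ℂ) - (μ : ℂ) • C (l % N₀)) k N₀)
          < 1) ↔
      (⨆ i : Fin M, ∏ l ∈ Finset.range N₀, |1 - μ * D l i|) < 1 := by
  simp only [specRad_prodDesc_one_sub_smul hN μ C hU D hCU]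
  exact ⟨fun h => h 0 hN, fun h _ _ => h⟩

/-- **Mean convergence under common eigenvectors**: if `C[k] = U D[k] Uᴴ` with `U`
unitary and `D[k]` real diagonal with nonnegative entries, then `ρ(Φ(k,k)) < 1` for
every `k < N₀` iff `max_m ∏_{l=0}^{N₀−1} |1 − μ (D[l])_{m,m}| < 1`. -/
theorem lms_mean_convergence_common_eigenvectors
    {M N₀ : ℕ} (hM : 1 ≤ M) (hN : 1 ≤ N₀) (μ : ℝ) (hμ : 0 < μ)
    (C : ℕ → Matrix (Fin M) (Fin M) ℂ) (g : ℕ → Fin M → ℂ)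
    (hC : ∀ k < N₀, (C k).PosSemidef)
    (U : Matrix (Fin M) (Fin M) ℂ) (hU : U ∈ Matrix.unitaryGroup (Fin M) ℂ)
    (D : ℕ → Fin M → ℝ) (hD : ∀ k, ∀ i, 0 ≤ D k i)
    (hCU : ∀ k < N₀, C k = U * Matrix.diagonal (fun i => (D k i : ℂ)) * U.conjTranspose) :
    (∀ k < N₀,
        specRad (prodDesc (fun l => (1 : Matrix (Fin M) (Fin M) ℂ) - (μ : ℂ) • C (l % N₀)) k N₀)
          < 1) ↔
      (⨆ i : Fin M, ∏ l ∈ Finset.range N₀, |1 - μ * D l i|) < 1 :=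
  lms_mean_convergence_common_eigenvectors_general hN μ C U hU D hCU
end
end

section
/- Steady-state limit of the mean: if ρ(Φ(k,k)) < 1 for some k ∈ {0,…,N₀−1}, then I_M − Φ(k,k) is invertible and, for every initial vector m₀ ∈ ℂ^M, lim_{n→∞} m[nN₀+k] = −μ (I_M − Φ(k,k))⁻¹ b_k; moreover this limit equals the zero vector if and only if b_k = 0. -/
/-! Over one period the mean recursion is affine with constant coefficients:
`m[(n+1)N₀+k] = Φ(k,k) m[nN₀+k] − μ b_k`, since the recursion restarts identically at every
multiple of `N₀` and variation of constants over one period produces exactly `b_k`. Gelfand's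
formula turns `ρ(Φ(k,k)) < 1` into `Φ(k,k)ⁿ → 0`, and `1 ∉ σ(Φ(k,k))` makes `I − Φ(k,k)`
invertible, so the iteration converges to its unique fixed point `−μ (I − Φ(k,k))⁻¹ b_k`. -/

open Matrix Filter
open scoped ComplexOrder

noncomputable section

/-- The mean coefficients-error recursion
`m[n+1] = (I − μ C[n mod N₀]) m[n] − μ C[n mod N₀] g[n mod N₀]`. -/
def meanSeq {M : ℕ} (N₀ : ℕ) (μ : ℝ) (C : ℕ → Matrix (Fin M) (Fin M) ℂ)
    (g : ℕ → Fin M → ℂ) (m₀ : Fin M → ℂ) : ℕ → Fin M → ℂ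
  | 0 => m₀
  | (n + 1) =>
      ((1 : Matrix (Fin M) (Fin M) ℂ) - (μ : ℂ) • C (n % N₀)) *ᵥ meanSeq N₀ μ C g m₀ n -
        (μ : ℂ) • (C (n % N₀) *ᵥ g (n % N₀))

open Finset Topology

theorem tendsto_pow_atTop_nhds_zero_of_spectralRadius_lt_one {A : Type*} [NormedRing A]
    [NormedAlgebra ℂ A] [CompleteSpace A] {a : A} (ha : spectralRadius ℂ a < 1) :
    Tendsto (a ^ ·) atTop (𝓝 0) := by
  obtain ⟨r, hρr, hr⟩ := ENNReal.lt_iff_exists_nnreal_btwn.mp ha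
  have hr' : (r : ℝ) < 1 := by exact_mod_cast hr
  have hroot : ∀ᶠ n : ℕ in atTop, (‖a ^ n‖₊ : ENNReal) ^ (1 / (n : ℝ)) < r :=
    (spectrum.pow_nnnorm_pow_one_div_tendsto_nhds_spectralRadius a).eventually_lt_const hρr
  have hbound : ∀ᶠ n : ℕ in atTop, ‖a ^ n‖ ≤ (r : ℝ) ^ n := by
    filter_upwards [hroot, eventually_ge_atTop 1] with n hn hn1
    have hn0 : (n : ℝ) ≠ 0 := by positivity
    have : (‖a ^ n‖₊ : ENNReal) ≤ ((r ^ n : NNReal) : ENNReal) := by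
      calc (‖a ^ n‖₊ : ENNReal) = ((‖a ^ n‖₊ : ENNReal) ^ (1 / (n : ℝ))) ^ (n : ℝ) := by
            rw [← ENNReal.rpow_mul, one_div, inv_mul_cancel₀ hn0, ENNReal.rpow_one]
        _ ≤ (r : ENNReal) ^ (n : ℝ) := ENNReal.rpow_le_rpow hn.le n.cast_nonneg
        _ = ((r ^ n : NNReal) : ENNReal) := by rw [ENNReal.rpow_natCast, ENNReal.coe_pow]
    exact_mod_cast this
  exact squeeze_zero_norm' hbound (tendsto_pow_atTop_nhds_zero_of_lt_one r.coe_nonneg hr')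

theorem isUnit_one_sub_of_spectralRadius_lt_one {𝕜 A : Type*} [NormedField 𝕜] [Ring A]
    [Algebra 𝕜 A] {a : A} (ha : spectralRadius 𝕜 a < 1) : IsUnit (1 - a) := by
  have hone : (1 : 𝕜) ∉ spectrum 𝕜 a := fun h => by
    have := le_iSup₂ (f := fun k (_ : k ∈ spectrum 𝕜 a) => (‖k‖₊ : ENNReal)) 1 h
    rw [nnnorm_one, ENNReal.coe_one] at this
    exact ha.not_ge this
  simpa using spectrum.notMem_iff.mp hone

theorem spectralRadius_lt_one_of_specRad_lt_one {n : Type*} [Fintype n] [DecidableEq n]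
    {A : Matrix n n ℂ} (hA : specRad A < 1) : spectralRadius ℂ A < 1 := by
  have hbdd : BddAbove ((fun z : ℂ => ‖z‖) '' spectrum ℂ A) :=
    (A.finite_spectrum.image _).bddAbove
  refine lt_of_le_of_lt (iSup₂_le fun z hz => ?_) (ENNReal.ofReal_lt_one.mpr hA)
  rw [← enorm_eq_nnnorm, ← ofReal_norm]
  exact ENNReal.ofReal_le_ofReal (le_csSup hbdd ⟨z, hz, rfl⟩)

theorem Matrix.tendsto_pow_atTop_nhds_zero_of_spectralRadius_lt_one {n : Type*} [Fintype n]
    [DecidableEq n] {A : Matrix n n ℂ} (hA : spectralRadius ℂ A < 1) :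
    Tendsto (A ^ ·) atTop (𝓝 0) :=
  -- any Banach-algebra norm will do; the `ℓ∞` operator norm induces the product topology
  letI := Matrix.linftyOpNormedRing (n := n) (α := ℂ)
  letI := Matrix.linftyOpNormedAlgebra (n := n) (R := ℂ) (α := ℂ)
  _root_.tendsto_pow_atTop_nhds_zero_of_spectralRadius_lt_one hA

theorem Matrix.tendsto_nonsing_inv_mulVec_of_eq_mulVec_add {n R : Type*} [Fintype n]
    [DecidableEq n] [CommRing R] [TopologicalSpace R] [IsTopologicalRing R] {Φ : Matrix n n R}
    (hΦ : Tendsto (Φ ^ ·) atTop (𝓝 0)) (hunit : IsUnit (1 - Φ)) {c : n → R} {y : ℕ → n → R}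
    (hy : ∀ j, y (j + 1) = Φ *ᵥ y j + c) : Tendsto y atTop (𝓝 ((1 - Φ)⁻¹ *ᵥ c)) := by
  set p := (1 - Φ)⁻¹ *ᵥ c
  have hfix : Φ *ᵥ p + c = p := by
    have : (1 - Φ) *ᵥ p = c := by
      rw [mulVec_mulVec, mul_nonsing_inv _ ((isUnit_iff_isUnit_det _).mp hunit), one_mulVec]
    rw [← this, sub_mulVec, one_mulVec]; abel
  have hclosed : ∀ j, y j = Φ ^ j *ᵥ (y 0 - p) + p := by
    intro j
    induction j with
    | zero => simp
    | succ j ih => rw [hy, ih, mulVec_add, mulVec_mulVec, ← pow_succ', add_assoc, hfix]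
  have hlim : Tendsto (fun j => Φ ^ j *ᵥ (y 0 - p) + p) atTop (𝓝 (0 *ᵥ (y 0 - p) + p)) :=
    (((continuous_id.matrix_mulVec continuous_const).tendsto 0).comp hΦ).add_const p
  rw [zero_mulVec, zero_add] at hlim
  exact hlim.congr fun j => (hclosed j).symm

theorem eq_prodDesc_mulVec_add_sum_Ico {M : ℕ} {A : ℕ → Matrix (Fin M) (Fin M) ℂ}
    {c x : ℕ → Fin M → ℂ} (hx : ∀ n, x (n + 1) = A n *ᵥ x n + c n) (a t : ℕ) :
    x (a + t) = prodDesc A a t *ᵥ x a +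
      ∑ l ∈ Ico a (a + t), prodDesc A (l + 1) (a + t - (l + 1)) *ᵥ c l := by
  induction t with
  | zero => simp [prodDesc]
  | succ t ih =>
    have hstep : ∀ l ∈ Ico a (a + t),
        A (a + t) *ᵥ (prodDesc A (l + 1) (a + t - (l + 1)) *ᵥ c l) =
          prodDesc A (l + 1) (a + t + 1 - (l + 1)) *ᵥ c l := by
      intro l hl
      rw [mem_Ico] at hl
      rw [mulVec_mulVec, show a + t + 1 - (l + 1) = a + t - (l + 1) + 1 by omega, prodDesc,
        show l + 1 + (a + t - (l + 1)) = a + t by omega]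
    rw [← add_assoc, hx, ih, sum_Ico_succ_top (by omega), mulVec_add, mulVec_mulVec, mulVec_sum,
      sum_congr rfl hstep, Nat.sub_self, prodDesc, one_mulVec, add_assoc]
    rfl

section meanSeq

variable {M N₀ : ℕ} {μ : ℝ} {C : ℕ → Matrix (Fin M) (Fin M) ℂ} {g : ℕ → Fin M → ℂ}

theorem meanSeq_succ (m₀ : Fin M → ℂ) (n : ℕ) :
    meanSeq N₀ μ C g m₀ (n + 1) =
      ((1 : Matrix (Fin M) (Fin M) ℂ) - (μ : ℂ) • C (n % N₀)) *ᵥ meanSeq N₀ μ C g m₀ n +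
        -((μ : ℂ) • (C (n % N₀) *ᵥ g (n % N₀))) :=
  sub_eq_add_neg _ _

theorem meanSeq_mul_add (m₀ : Fin M → ℂ) (n j : ℕ) :
    meanSeq N₀ μ C g m₀ (n * N₀ + j) = meanSeq N₀ μ C g (meanSeq N₀ μ C g m₀ (n * N₀)) j := by
  induction j with
  | zero => rfl
  | succ j ih => rw [← add_assoc, meanSeq_succ, meanSeq_succ, ih, Nat.mul_add_mod_self_right]

theorem meanSeq_add_period (hN : 1 ≤ N₀) (m₀ : Fin M → ℂ) (k : ℕ) :
    meanSeq N₀ μ C g m₀ (k + N₀) =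
      prodDesc (fun l => (1 : Matrix (Fin M) (Fin M) ℂ) - (μ : ℂ) • C (l % N₀)) k N₀ *ᵥ
          meanSeq N₀ μ C g m₀ k -
        (μ : ℂ) • ∑ l ∈ Icc k (N₀ - 1 + k),
          prodDesc (fun l' => (1 : Matrix (Fin M) (Fin M) ℂ) - (μ : ℂ) • C (l' % N₀))
            (l + 1) (N₀ + k - (l + 1)) *ᵥ (C (l % N₀) *ᵥ g (l % N₀)) := by
  have hIcc : Icc k (N₀ - 1 + k) = Ico k (k + N₀) := by
    ext l; simp only [mem_Icc, mem_Ico]; omega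
  rw [eq_prodDesc_mulVec_add_sum_Ico (meanSeq_succ m₀), hIcc, add_comm N₀ k, smul_sum,
    sub_eq_add_neg, ← sum_neg_distrib]
  simp only [mulVec_neg, mulVec_smul]

end meanSeq

theorem meanSeq_steady_state_limit_general
    {M N₀ : ℕ} (hN : 1 ≤ N₀) (μ : ℝ) (hμ : 0 < μ)
    (C : ℕ → Matrix (Fin M) (Fin M) ℂ) (g : ℕ → Fin M → ℂ)
    (bk : ℕ → Fin M → ℂ)
    (hbk : ∀ k, bk k = ∑ l ∈ Finset.Icc k (N₀ - 1 + k),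
      prodDesc (fun l' => (1 : Matrix (Fin M) (Fin M) ℂ) - (μ : ℂ) • C (l' % N₀))
          (l + 1) (N₀ + k - (l + 1)) *ᵥ (C (l % N₀) *ᵥ g (l % N₀)))
    (k : ℕ)
    (hρ : specRad
      (prodDesc (fun l => (1 : Matrix (Fin M) (Fin M) ℂ) - (μ : ℂ) • C (l % N₀)) k N₀) < 1) :
    IsUnit ((1 : Matrix (Fin M) (Fin M) ℂ) -
        prodDesc (fun l => (1 : Matrix (Fin M) (Fin M) ℂ) - (μ : ℂ) • C (l % N₀)) k N₀) ∧
      (∀ m₀ : Fin M → ℂ,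
        Tendsto (fun n => meanSeq N₀ μ C g m₀ (n * N₀ + k)) atTop
          (nhds (-((μ : ℂ) • (((1 : Matrix (Fin M) (Fin M) ℂ) -
            prodDesc (fun l => (1 : Matrix (Fin M) (Fin M) ℂ) - (μ : ℂ) • C (l % N₀)) k N₀)⁻¹
              *ᵥ bk k))))) ∧
      ((-((μ : ℂ) • (((1 : Matrix (Fin M) (Fin M) ℂ) -
          prodDesc (fun l => (1 : Matrix (Fin M) (Fin M) ℂ) - (μ : ℂ) • C (l % N₀)) k N₀)⁻¹
            *ᵥ bk k)) = 0) ↔ bk k = 0) := by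
  set Φ := prodDesc (fun l => (1 : Matrix (Fin M) (Fin M) ℂ) - (μ : ℂ) • C (l % N₀)) k N₀
  have hsr : spectralRadius ℂ Φ < 1 := spectralRadius_lt_one_of_specRad_lt_one hρ
  have hunit : IsUnit (1 - Φ) := isUnit_one_sub_of_spectralRadius_lt_one hsr
  refine ⟨hunit, fun m₀ => ?_, ?_⟩
  · have hperiod : ∀ n, meanSeq N₀ μ C g m₀ ((n + 1) * N₀ + k) =
        Φ *ᵥ meanSeq N₀ μ C g m₀ (n * N₀ + k) + -((μ : ℂ) • bk k) := fun n => by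
      rw [show (n + 1) * N₀ + k = n * N₀ + (k + N₀) by ring, meanSeq_mul_add,
        meanSeq_mul_add m₀ n k, meanSeq_add_period hN, hbk, sub_eq_add_neg]
    simpa only [mulVec_neg, mulVec_smul] using
      tendsto_nonsing_inv_mulVec_of_eq_mulVec_add (y := fun n => meanSeq N₀ μ C g m₀ (n * N₀ + k))
        (Matrix.tendsto_pow_atTop_nhds_zero_of_spectralRadius_lt_one hsr) hunit hperiod
  · have hμ' : (μ : ℂ) ≠ 0 := by exact_mod_cast hμ.ne'
    rw [neg_eq_zero, smul_eq_zero, or_iff_right hμ']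
    exact (mulVec_injective_of_isUnit (isUnit_nonsing_inv_iff.mpr hunit)).eq_iff' (mulVec_zero _)

/-- **Steady-state limit of the mean**: if `ρ(Φ(k,k)) < 1` then `I − Φ(k,k)` is
invertible and `m[nN₀+k] → −μ (I − Φ(k,k))⁻¹ b_k`; the limit is zero iff `b_k = 0`. -/
theorem meanSeq_steady_state_limit
    {M N₀ : ℕ} (hM : 1 ≤ M) (hN : 1 ≤ N₀) (μ : ℝ) (hμ : 0 < μ)
    (C : ℕ → Matrix (Fin M) (Fin M) ℂ) (g : ℕ → Fin M → ℂ)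
    (hC : ∀ k < N₀, (C k).PosSemidef)
    (bk : ℕ → Fin M → ℂ)
    (hbk : ∀ k, bk k = ∑ l ∈ Finset.Icc k (N₀ - 1 + k),
      prodDesc (fun l' => (1 : Matrix (Fin M) (Fin M) ℂ) - (μ : ℂ) • C (l' % N₀))
          (l + 1) (N₀ + k - (l + 1)) *ᵥ (C (l % N₀) *ᵥ g (l % N₀)))
    (k : ℕ) (hk : k < N₀)
    (hρ : specRad
      (prodDesc (fun l => (1 : Matrix (Fin M) (Fin M) ℂ) - (μ : ℂ) • C (l % N₀)) k N₀) < 1) :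
    IsUnit ((1 : Matrix (Fin M) (Fin M) ℂ) -
        prodDesc (fun l => (1 : Matrix (Fin M) (Fin M) ℂ) - (μ : ℂ) • C (l % N₀)) k N₀) ∧
      (∀ m₀ : Fin M → ℂ,
        Tendsto (fun n => meanSeq N₀ μ C g m₀ (n * N₀ + k)) atTop
          (nhds (-((μ : ℂ) • (((1 : Matrix (Fin M) (Fin M) ℂ) -
            prodDesc (fun l => (1 : Matrix (Fin M) (Fin M) ℂ) - (μ : ℂ) • C (l % N₀)) k N₀)⁻¹
              *ᵥ bk k))))) ∧
      ((-((μ : ℂ) • (((1 : Matrix (Fin M) (Fin M) ℂ) -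
          prodDesc (fun l => (1 : Matrix (Fin M) (Fin M) ℂ) - (μ : ℂ) • C (l % N₀)) k N₀)⁻¹
            *ᵥ bk k)) = 0) ↔ bk k = 0) :=
  meanSeq_steady_state_limit_general hN μ hμ C g bk hbk k hρ
end
end

section
/- Positive definiteness via the block companion matrix: let A and B be Hermitian n×n complex matrices and μ > 0 real. Define the 2n×2n complex matrix H := (1/2)·[[A, −B],[2 I_n, 0]] (block form). If either H has no real positive eigenvalue, or μ·t < 1 for every real positive eigenvalue t of H, then the Hermitian matrix 2 I_n − μA + μ²B is positive definite. -/
/-!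
Along the path `M s = 2 I - s A + s² B` of Hermitian matrices, `M 0 = 2 I` is positive definite.
If `M s *ᵥ y = 0` with `s > 0` and `y ≠ 0`, then `(s⁻¹ y, y)` is an eigenvector of `H` with the
positive eigenvalue `s⁻¹`, which the hypothesis excludes for `s ≤ μ`. So `M s` is nonsingular on
`(0, μ]`, and a continuous path of Hermitian matrices that starts positive definite and never
becomes singular stays positive definite: the minimum of `x ↦ xᴴ (M s) x` on the unit sphere is
continuous in `s`, positive at `0`, and if it reached `0` its minimiser would lie in the kernel.
-/

open Matrix
open scoped ComplexOrder

namespace Matrix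

variable {n : Type*} [Fintype n] {𝕜 : Type*} [RCLike 𝕜]

/-- The sphere is that of the sup norm on `n → 𝕜`; any norm would do, since only compactness of
the sphere and homogeneity of the quadratic form are used. -/
noncomputable def sphereMin (M : Matrix n n 𝕜) : ℝ :=
  sInf ((fun x => RCLike.re (star x ⬝ᵥ (M *ᵥ x))) '' Metric.sphere 0 1)

lemma re_star_dotProduct_mulVec_real_smul (M : Matrix n n 𝕜) (r : ℝ) (x : n → 𝕜) :
    RCLike.re (star (r • x) ⬝ᵥ (M *ᵥ (r • x))) = r ^ 2 * RCLike.re (star x ⬝ᵥ (M *ᵥ x)) := by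
  rw [star_smul, mulVec_smul, dotProduct_smul, smul_dotProduct, star_trivial, smul_smul,
    RCLike.smul_re, sq]

lemma sphereMin_mul_norm_sq_le (M : Matrix n n 𝕜) (x : n → 𝕜) :
    M.sphereMin * ‖x‖ ^ 2 ≤ RCLike.re (star x ⬝ᵥ (M *ᵥ x)) := by
  rcases eq_or_ne x 0 with rfl | hx
  · simp
  have hbdd : BddBelow ((fun x => RCLike.re (star x ⬝ᵥ (M *ᵥ x))) '' Metric.sphere 0 1) :=
    ((isCompact_sphere 0 1).image (by fun_prop)).bddBelow
  have hu : ‖x‖⁻¹ • x ∈ Metric.sphere (0 : n → 𝕜) 1 := by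
    simp [norm_smul, hx]
  have hx' : x = ‖x‖ • (‖x‖⁻¹ • x) := by
    rw [smul_smul, mul_inv_cancel₀ (norm_ne_zero_iff.mpr hx), one_smul]
  conv_rhs => rw [hx', re_star_dotProduct_mulVec_real_smul, mul_comm]
  gcongr
  exact csInf_le hbdd (Set.mem_image_of_mem _ hu)

lemma exists_mem_sphere_sphereMin_eq [Nonempty n] (M : Matrix n n 𝕜) :
    ∃ x ∈ Metric.sphere (0 : n → 𝕜) 1, RCLike.re (star x ⬝ᵥ (M *ᵥ x)) = M.sphereMin := by
  obtain ⟨x, hx, h⟩ := (isCompact_sphere (0 : n → 𝕜) 1).exists_sInf_image_eq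
    (NormedSpace.sphere_nonempty.mpr zero_le_one)
    (f := fun x => RCLike.re (star x ⬝ᵥ (M *ᵥ x))) (by fun_prop)
  exact ⟨x, hx, h.symm⟩

lemma _root_.Continuous.matrix_sphereMin {X : Type*} [TopologicalSpace X] {M : X → Matrix n n 𝕜}
    (hM : Continuous M) : Continuous fun s => (M s).sphereMin :=
  (isCompact_sphere _ _).continuous_sInf (by fun_prop)

lemma IsHermitian.posDef_iff_sphereMin_pos [Nonempty n] {M : Matrix n n 𝕜} (hM : M.IsHermitian) :
    M.PosDef ↔ 0 < M.sphereMin := by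
  rw [posDef_iff_dotProduct_mulVec]
  constructor
  · rintro ⟨-, hpos⟩
    obtain ⟨x, hx, hmin⟩ := M.exists_mem_sphere_sphereMin_eq
    rw [← hmin]
    exact (RCLike.pos_iff.mp (hpos (ne_zero_of_mem_sphere one_ne_zero ⟨x, hx⟩))).1
  · intro hmin
    refine ⟨hM, fun x hx => RCLike.pos_iff.mpr ⟨?_, hM.im_star_dotProduct_mulVec_self x⟩⟩
    exact (mul_pos hmin (by positivity)).trans_le (M.sphereMin_mul_norm_sq_le x)

lemma IsHermitian.det_eq_zero_of_sphereMin_eq_zero [Nonempty n] [DecidableEq n]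
    {M : Matrix n n 𝕜} (hM : M.IsHermitian) (hmin : M.sphereMin = 0) : M.det = 0 := by
  have hpsd : M.PosSemidef := by
    refine posSemidef_iff_dotProduct_mulVec.mpr
      ⟨hM, fun x => RCLike.nonneg_iff.mpr ⟨?_, hM.im_star_dotProduct_mulVec_self x⟩⟩
    simpa [hmin] using M.sphereMin_mul_norm_sq_le x
  obtain ⟨x, hx, hx0⟩ := M.exists_mem_sphere_sphereMin_eq
  refine exists_mulVec_eq_zero_iff.mp ⟨x, ne_zero_of_mem_sphere one_ne_zero ⟨x, hx⟩, ?_⟩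
  rw [← hpsd.dotProduct_mulVec_zero_iff, ← RCLike.re_add_im (star x ⬝ᵥ (M *ᵥ x)), hx0, hmin,
    hM.im_star_dotProduct_mulVec_self]
  simp

theorem PosDef.of_continuous_of_det_ne_zero [DecidableEq n] {M : ℝ → Matrix n n 𝕜}
    (hM : Continuous M) {a b : ℝ} (hab : a ≤ b) (hherm : ∀ s ∈ Set.Icc a b, (M s).IsHermitian)
    (ha : (M a).PosDef) (hdet : ∀ s ∈ Set.Ioc a b, (M s).det ≠ 0) : (M b).PosDef := by
  cases isEmpty_or_nonempty n
  · exact Subsingleton.elim (M a) (M b) ▸ ha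
  have hmin_a := (hherm a ⟨le_rfl, hab⟩).posDef_iff_sphereMin_pos.mp ha
  rw [(hherm b ⟨hab, le_rfl⟩).posDef_iff_sphereMin_pos]
  by_contra! hmin_b
  obtain ⟨s, hs, hmin_s⟩ :=
    intermediate_value_Icc' hab hM.matrix_sphereMin.continuousOn ⟨hmin_b, hmin_a.le⟩
  have has : a ≠ s := by
    rintro rfl
    exact hmin_a.ne' hmin_s
  exact hdet s ⟨hs.1.lt_of_ne has, hs.2⟩
    ((hherm s hs).det_eq_zero_of_sphereMin_eq_zero hmin_s)

theorem mem_spectrum_of_mulVec_eq_smul {m K : Type*} [Fintype m] [DecidableEq m] [Field K]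
    {H : Matrix m m K} {t : K} {v : m → K} (hv : v ≠ 0) (h : H *ᵥ v = t • v) :
    t ∈ spectrum K H := by
  rw [← spectrum_toLin']
  exact Module.End.HasEigenvalue.mem_spectrum
    (Module.End.hasEigenvalue_of_hasEigenvector ⟨Module.End.mem_eigenspace_iff.mpr h, hv⟩)

end Matrix

theorem mem_spectrum_blockCompanion {m K : Type*} [Fintype m] [DecidableEq m] [Field K]
    [NeZero (2 : K)] (A B : Matrix m m K) {t : K}
    (h : ((2 * t ^ 2) • (1 : Matrix m m K) - t • A + B).det = 0) :
    t ∈ spectrum K ((1 / 2 : K) • fromBlocks A (-B) ((2 : K) • (1 : Matrix m m K)) 0) := by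
  obtain ⟨y, hy, hPy⟩ := exists_mulVec_eq_zero_iff.mpr h
  refine mem_spectrum_of_mulVec_eq_smul (v := Sum.elim (t • y) y)
    (fun hv => hy (funext fun i => congrFun hv (Sum.inr i))) ?_
  rw [smul_mulVec, fromBlocks_mulVec, Sum.elim_comp_inl, Sum.elim_comp_inr]
  ext (i | i)
  · have hi := congrFun hPy i
    simp only [add_mulVec, sub_mulVec, smul_mulVec, one_mulVec, Pi.add_apply, Pi.sub_apply,
      Pi.smul_apply, smul_eq_mul, Pi.zero_apply] at hi
    simp only [mulVec_smul, neg_mulVec, Pi.smul_apply, Pi.add_apply, Pi.neg_apply, smul_eq_mul,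
      Sum.elim_inl]
    field_simp
    linear_combination -hi
  · simp only [smul_mulVec, one_mulVec, zero_mulVec, add_zero, Pi.smul_apply, smul_eq_mul,
      Sum.elim_inr]
    field_simp

theorem posDef_of_block_companion_general
    {n : ℕ} (A B : Matrix (Fin n) (Fin n) ℂ)
    (hA : A.IsHermitian) (hB : B.IsHermitian) (μ : ℝ) (hμ : 0 < μ)
    (H : Matrix (Fin n ⊕ Fin n) (Fin n ⊕ Fin n) ℂ)
    (hH : H = (1 / 2 : ℂ) •
      Matrix.fromBlocks A (-B) ((2 : ℂ) • (1 : Matrix (Fin n) (Fin n) ℂ)) 0)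
    (hcond : (∀ t : ℝ, 0 < t → (t : ℂ) ∉ spectrum ℂ H) ∨
      (∀ t : ℝ, 0 < t → (t : ℂ) ∈ spectrum ℂ H → μ * t < 1)) :
    ((2 : ℂ) • (1 : Matrix (Fin n) (Fin n) ℂ) - (μ : ℂ) • A + ((μ : ℂ)) ^ 2 • B).PosDef := by
  let M : ℝ → Matrix (Fin n) (Fin n) ℂ := fun s => (2 : ℂ) • 1 - (s : ℂ) • A + (s : ℂ) ^ 2 • B
  have hreal (s : ℝ) : IsSelfAdjoint (s : ℂ) := Complex.conj_ofReal s
  have hherm (s : ℝ) : (M s).IsHermitian :=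
    ((isHermitian_one.smul (IsSelfAdjoint.ofNat 2)).sub (hA.smul (hreal s))).add
      (hB.smul ((hreal s).pow 2))
  refine PosDef.of_continuous_of_det_ne_zero (M := M) (by fun_prop) hμ.le (fun s _ => hherm s)
    (by simpa [M] using PosDef.one.smul two_pos) ?_
  rintro s ⟨hs, hsμ⟩ hdet
  have hspec : ((s⁻¹ : ℝ) : ℂ) ∈ spectrum ℂ H := by
    rw [hH]
    refine mem_spectrum_blockCompanion A B ?_
    have hs' : (s : ℂ) ≠ 0 := by exact_mod_cast hs.ne'
    have hM : ((2 : ℂ) * ((s⁻¹ : ℝ) : ℂ) ^ 2) • 1 - ((s⁻¹ : ℝ) : ℂ) • A + B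
        = ((s⁻¹ : ℝ) : ℂ) ^ 2 • M s := by
      simp only [M]
      push_cast
      match_scalars <;> field_simp
    rw [hM, det_smul, hdet, mul_zero]
  rcases hcond with hnone | hsmall
  · exact hnone _ (inv_pos.2 hs) hspec
  · have hμs := hsmall _ (inv_pos.2 hs) hspec
    rw [← div_eq_mul_inv] at hμs
    exact hμs.not_ge ((one_le_div hs).mpr hsμ)

/-- **Positive definiteness via the block companion matrix**: for `A, B` Hermitian and
`H = (1/2)·[[A, −B],[2Iₙ, 0]]`, if either `H` has no real positive eigenvalue, or
`μ·t < 1` for every real positive eigenvalue `t` of `H`, then `2Iₙ − μA + μ²B` is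
positive definite. -/
theorem posDef_of_block_companion
    {n : ℕ} (hn : 1 ≤ n) (A B : Matrix (Fin n) (Fin n) ℂ)
    (hA : A.IsHermitian) (hB : B.IsHermitian) (μ : ℝ) (hμ : 0 < μ)
    (H : Matrix (Fin n ⊕ Fin n) (Fin n ⊕ Fin n) ℂ)
    (hH : H = (1 / 2 : ℂ) •
      Matrix.fromBlocks A (-B) ((2 : ℂ) • (1 : Matrix (Fin n) (Fin n) ℂ)) 0)
    (hcond : (∀ t : ℝ, 0 < t → (t : ℂ) ∉ spectrum ℂ H) ∨
      (∀ t : ℝ, 0 < t → (t : ℂ) ∈ spectrum ℂ H → μ * t < 1)) :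
    ((2 : ℂ) • (1 : Matrix (Fin n) (Fin n) ℂ) - (μ : ℂ) • A + ((μ : ℂ)) ^ 2 • B).PosDef :=
  posDef_of_block_companion_general A B hA hB μ hμ H hH hcond
end
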